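/- Let k, m be integers, and let G be the group with presentation ⟨a, b, c, d, q, t ∣ a q a⁻¹ = c q c⁻¹, q a q⁻¹ = b, q c q⁻¹ = d, t a t⁻¹ = c⁻¹, t b t⁻¹ = c d⁻¹ c⁻¹, a b⁻¹ = 1, q⁻¹ t⁻¹ q t a^{2k} = 1, a⁻¹ c q^{2m} = 1⟩. Then G is isomorphic to the semidirect product ℤ² ⋊_A ℤ, where the generator of ℤ acts on ℤ² by the matrix A = [[−1, −2k], [2m, 4km+1]]. -/

import Mathlib

/-- The relators of the presentation
`⟨a, b, c, d, q, t ∣ a q a⁻¹ = c q c⁻¹, q a q⁻¹ = b, q c q⁻¹ = d, t a t⁻¹ = c⁻¹,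
t b t⁻¹ = c d⁻¹ c⁻¹, a b⁻¹ = 1, q⁻¹ t⁻¹ q t a^{2k} = 1, a⁻¹ c q^{2m} = 1⟩`
on the generators `a = 0`, `b = 1`, `c = 2`, `d = 3`, `q = 4`, `t = 5`. -/
def solRels (k m : ℤ) : Set (FreeGroup (Fin 6)) :=
  letI a : FreeGroup (Fin 6) := FreeGroup.of 0
  letI b : FreeGroup (Fin 6) := FreeGroup.of 1
  letI c : FreeGroup (Fin 6) := FreeGroup.of 2
  letI d : FreeGroup (Fin 6) := FreeGroup.of 3
  letI q : FreeGroup (Fin 6) := FreeGroup.of 4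
  letI t : FreeGroup (Fin 6) := FreeGroup.of 5
  { a * q * a⁻¹ * (c * q * c⁻¹)⁻¹,
    q * a * q⁻¹ * b⁻¹,
    q * c * q⁻¹ * d⁻¹,
    t * a * t⁻¹ * c,
    t * b * t⁻¹ * (c * d⁻¹ * c⁻¹)⁻¹,
    a * b⁻¹,
    q⁻¹ * t⁻¹ * q * t * a ^ (2 * k),
    a⁻¹ * c * q ^ (2 * m) }

/-- The matrix `A = [[−1, −2k], [2m, 4km+1]]`. -/
def solMatrix (k m : ℤ) : Matrix (Fin 2) (Fin 2) ℤ :=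
  !![-1, -2 * k; 2 * m, 4 * k * m + 1]

/-- `A = [[−1, −2k], [2m, 4km+1]]` has determinant `−1`, hence is invertible over `ℤ`. -/
noncomputable def solMatrixInvertible (k m : ℤ) : Invertible (solMatrix k m) :=
  (solMatrix k m).invertibleOfIsUnitDet (by
    rw [solMatrix, Matrix.det_fin_two_of]
    have : (-1 : ℤ) * (4 * k * m + 1) - (-2 * k) * (2 * m) = -1 := by ring
    rw [this]
    exact isUnit_one.neg)

/-- The action of `ℤ` on `ℤ²` in which the generator of `ℤ` acts by the matrix
`A = [[−1, −2k], [2m, 4km+1]]`, written multiplicatively. -/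
noncomputable def solAction (k m : ℤ) :
    Multiplicative ℤ →* MulAut (Multiplicative (Fin 2 → ℤ)) :=
  zpowersHom (MulAut (Multiplicative (Fin 2 → ℤ)))
    (AddEquiv.toMultiplicative
      ((solMatrix k m).toLinearEquiv' (solMatrixInvertible k m)).toAddEquiv)

/-- The semidirect product `ℤ² ⋊_A ℤ`, where the generator of `ℤ` acts on `ℤ²` by
`A = [[−1, −2k], [2m, 4km+1]]`. -/
noncomputable def SolGroup (k m : ℤ) : Type :=
  Multiplicative (Fin 2 → ℤ) ⋊[solAction k m] Multiplicative ℤ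

noncomputable instance (k m : ℤ) : Group (SolGroup k m) := by
  unfold SolGroup; infer_instance

/-!
The relators force `b = a`, `d = c = a q^{-2m}` and `a q = q a`, so `a` and `q` span an image
of `ℤ²`, and the remaining relators say that conjugation by `t` sends `a ↦ c⁻¹ = a⁻¹ q^{2m}` and
`q ↦ q c^{-2k} = a^{-2k} q^{4km+1}`: it acts on this `ℤ²` by the columns of `A`. This gives a
homomorphism `ℤ² ⋊_A ℤ → G`. Conversely `a, b ↦ e₁`, `c, d ↦ e₁ - 2m e₂`, `q ↦ e₂`, `t ↦ 1 ∈ ℤ`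
respects the relators, and the two homomorphisms are mutually inverse on generators.
-/

open Multiplicative SemidirectProduct

section General

variable {G : Type*} [Group G]

def Commute.zpowersPairHom {a b : G} (h : Commute a b) : Multiplicative (Fin 2 → ℤ) →* G where
  toFun v := a ^ v.toAdd 0 * b ^ v.toAdd 1
  map_one' := by simp
  map_mul' v w := by
    simp only [toAdd_mul, Pi.add_apply, zpow_add, mul_assoc, (h.zpow_zpow _ _).symm.left_comm]

theorem MonoidHom.ext_fin_two_int {f g : Multiplicative (Fin 2 → ℤ) →* G}
    (h₀ : f (ofAdd ![1, 0]) = g (ofAdd ![1, 0])) (h₁ : f (ofAdd ![0, 1]) = g (ofAdd ![0, 1])) :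
    f = g := by
  refine MonoidHom.ext fun v => ?_
  have hv : v = ofAdd ![1, 0] ^ v.toAdd 0 * ofAdd ![0, 1] ^ v.toAdd 1 := by
    ext i; fin_cases i <;> simp
  rw [hv, map_mul, map_mul, map_zpow, map_zpow, map_zpow, map_zpow, h₀, h₁]

theorem SemidirectProduct.lift_compat_of_ofAdd_one {N : Type*} [Group N]
    {φ : Multiplicative ℤ →* MulAut N} {f : N →* G} {t : G}
    (h : ∀ n, f (φ (ofAdd 1) n) = t * f n * t⁻¹) (g : Multiplicative ℤ) :
    f.comp (φ g).toMonoidHom = (MulAut.conj (zpowersHom G t g)).toMonoidHom.comp f := by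
  set σ := φ (ofAdd 1)
  have h' : ∀ n, f (σ⁻¹ n) = t⁻¹ * f n * t := fun n => by
    have := h (σ⁻¹ n)
    rw [MulAut.apply_inv_self] at this
    rw [this]; group
  have hg : g = ofAdd 1 ^ g.toAdd := by simp [← ofAdd_zsmul]
  ext n
  simp only [MonoidHom.comp_apply, MulEquiv.coe_toMonoidHom, MulAut.conj_apply, zpowersHom_apply]
  rw [hg, map_zpow, toAdd_zpow, toAdd_ofAdd, smul_eq_mul, mul_one]
  induction g.toAdd using Int.induction_on generalizing n with
  | zero => simp
  | succ z ih => rw [zpow_add_one, MulAut.mul_apply, ih, h, zpow_add_one]; group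
  | pred z ih => rw [zpow_sub_one, MulAut.mul_apply, ih, h', zpow_sub_one]; group

end General

namespace SolGroup

variable {k m : ℤ}

theorem solAction_ofAdd_one (x y : ℤ) :
    solAction k m (ofAdd 1) (ofAdd ![x, y]) =
      ofAdd ![-x - 2 * k * y, 2 * m * x + (4 * k * m + 1) * y] := by
  simp only [solAction, zpowersHom_apply, toAdd_ofAdd, zpow_one]
  change ofAdd ((solMatrix k m).mulVec ![x, y]) = _
  congr 1
  ext i
  fin_cases i <;> simp [solMatrix, Matrix.mulVec, dotProduct]
  ring

theorem solAction_ofAdd_one_inv (x y : ℤ) :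
    (solAction k m (ofAdd 1))⁻¹ (ofAdd ![x, y]) =
      ofAdd ![-(4 * k * m + 1) * x - 2 * k * y, 2 * m * x + y] := by
  rw [MulAut.inv_def, MulEquiv.symm_apply_eq, solAction_ofAdd_one]
  congr 1
  ext i
  fin_cases i <;> simp <;> ring

local notation "ℤ²⋊ℤ" => Multiplicative (Fin 2 → ℤ) ⋊[solAction k m] Multiplicative ℤ
local notation "τ" => (inr (ofAdd 1) : ℤ²⋊ℤ)

theorem inr_conj_inl (x y : ℤ) : τ * inl (ofAdd ![x, y]) * τ⁻¹ =
    inl (ofAdd ![-x - 2 * k * y, 2 * m * x + (4 * k * m + 1) * y]) := by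
  rw [← map_inv, ← inl_aut, solAction_ofAdd_one]

theorem inr_inv_conj_inl (x y : ℤ) : τ⁻¹ * inl (ofAdd ![x, y]) * τ =
    inl (ofAdd ![-(4 * k * m + 1) * x - 2 * k * y, 2 * m * x + y]) := by
  rw [← map_inv, ← inl_aut_inv, solAction_ofAdd_one_inv]

noncomputable def generatorImage (k m : ℤ) :
    Fin 6 → Multiplicative (Fin 2 → ℤ) ⋊[solAction k m] Multiplicative ℤ :=
  ![inl (ofAdd ![1, 0]), inl (ofAdd ![1, 0]), inl (ofAdd ![1, -(2 * m)]),
    inl (ofAdd ![1, -(2 * m)]), inl (ofAdd ![0, 1]), inr (ofAdd 1)]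

theorem lift_generatorImage_relator {r : FreeGroup (Fin 6)} (hr : r ∈ solRels k m) :
    FreeGroup.lift (generatorImage k m) r = 1 := by
  simp only [solRels, Set.mem_insert_iff, Set.mem_singleton_iff] at hr
  rcases hr with rfl | rfl | rfl | rfl | rfl | rfl | rfl | rfl <;>
    simp only [map_mul, map_inv, map_zpow, FreeGroup.lift_apply_of, generatorImage, Matrix.cons_val]
  -- only relators 4, 5 and 7 involve `t`; the rest are identities in the abelian group `ℤ²`
  on_goal 4 => rw [inr_conj_inl]
  on_goal 5 => rw [inr_conj_inl]
  on_goal 7 => rw [mul_assoc (inl _)⁻¹, mul_assoc (inl _)⁻¹, inr_inv_conj_inl]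
  all_goals
    simp only [← map_inv, ← map_zpow, ← map_mul, ← ofAdd_neg, ← ofAdd_zsmul, ← ofAdd_add]
    rw [map_eq_one_iff _ inl_injective, ofAdd_eq_one]
    ext i
    fin_cases i <;> simp

local notation "𝐚" => (PresentedGroup.of 0 : PresentedGroup (solRels k m))
local notation "𝐛" => (PresentedGroup.of 1 : PresentedGroup (solRels k m))
local notation "𝐜" => (PresentedGroup.of 2 : PresentedGroup (solRels k m))
local notation "𝐝" => (PresentedGroup.of 3 : PresentedGroup (solRels k m))
local notation "𝐪" => (PresentedGroup.of 4 : PresentedGroup (solRels k m))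
local notation "𝐭" => (PresentedGroup.of 5 : PresentedGroup (solRels k m))

theorem relator_eq_one {r : FreeGroup (Fin 6)} (hr : r ∈ solRels k m) :
    FreeGroup.lift (PresentedGroup.of (rels := solRels k m)) r = 1 := by
  rw [show FreeGroup.lift PresentedGroup.of = PresentedGroup.mk (solRels k m) from
    FreeGroup.ext_hom _ _ fun _ => rfl]
  exact PresentedGroup.one_of_mem hr

theorem b_eq_a : 𝐛 = 𝐚 := by
  have h := relator_eq_one (k := k) (m := m) (r := .of 0 * (.of 1)⁻¹) (by simp [solRels])
  simp only [map_mul, map_inv, FreeGroup.lift_apply_of] at h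
  exact (mul_inv_eq_one.1 h).symm

theorem commute_a_q : Commute 𝐚 𝐪 := by
  have h := relator_eq_one (k := k) (m := m) (r := .of 4 * .of 0 * (.of 4)⁻¹ * (.of 1)⁻¹)
    (by simp [solRels])
  simp only [map_mul, map_inv, FreeGroup.lift_apply_of, b_eq_a, mul_inv_eq_one] at h
  exact (mul_inv_eq_iff_eq_mul.1 h).symm

theorem c_eq : 𝐜 = 𝐚 * 𝐪 ^ (-(2 * m)) := by
  have h := relator_eq_one (k := k) (m := m) (r := (.of 0)⁻¹ * .of 2 * .of 4 ^ (2 * m))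
    (by simp [solRels])
  simp only [map_mul, map_inv, map_zpow, FreeGroup.lift_apply_of, mul_assoc, inv_mul_eq_one] at h
  rw [zpow_neg, h, mul_inv_cancel_right]

theorem d_eq_c : 𝐝 = 𝐜 := by
  have h := relator_eq_one (k := k) (m := m) (r := .of 4 * .of 2 * (.of 4)⁻¹ * (.of 3)⁻¹)
    (by simp [solRels])
  simp only [map_mul, map_inv, FreeGroup.lift_apply_of, mul_inv_eq_one] at h
  have hcq : Commute 𝐜 𝐪 := c_eq ▸ commute_a_q.mul_left (Commute.zpow_self _ _)
  rw [← h, ← hcq.eq, mul_inv_cancel_right]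

theorem t_conj_a : 𝐭 * 𝐚 * 𝐭⁻¹ = 𝐜⁻¹ := by
  have h := relator_eq_one (k := k) (m := m) (r := .of 5 * .of 0 * (.of 5)⁻¹ * .of 2)
    (by simp [solRels])
  simp only [map_mul, map_inv, FreeGroup.lift_apply_of] at h
  exact eq_inv_of_mul_eq_one_left h

theorem t_conj_q : 𝐭 * 𝐪 * 𝐭⁻¹ = 𝐪 * 𝐜 ^ (-(2 * k)) := by
  have h := relator_eq_one (k := k) (m := m)
    (r := (.of 4)⁻¹ * (.of 5)⁻¹ * .of 4 * .of 5 * .of 0 ^ (2 * k)) (by simp [solRels])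
  simp only [map_mul, map_inv, map_zpow, FreeGroup.lift_apply_of] at h
  have h' : 𝐭⁻¹ * 𝐪 * 𝐭 * 𝐚 ^ (2 * k) = 𝐪 := by
    simp only [mul_assoc] at h ⊢
    exact (inv_mul_eq_one.1 h).symm
  have hc : 𝐜 ^ (-(2 * k)) = 𝐭 * 𝐚 ^ (2 * k) * 𝐭⁻¹ := by rw [← conj_zpow, t_conj_a, inv_zpow']
  conv_lhs => rw [← h']
  rw [hc]
  group

noncomputable def latticeHom (k m : ℤ) :
    Multiplicative (Fin 2 → ℤ) →* PresentedGroup (solRels k m) :=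
  (commute_a_q (k := k) (m := m)).zpowersPairHom

theorem latticeHom_ofAdd (x y : ℤ) : latticeHom k m (ofAdd ![x, y]) = 𝐚 ^ x * 𝐪 ^ y := rfl

theorem c_eq_latticeHom : 𝐜 = latticeHom k m (ofAdd ![1, -(2 * m)]) := by
  rw [latticeHom_ofAdd, zpow_one, c_eq]

theorem latticeHom_solAction (v : Multiplicative (Fin 2 → ℤ)) :
    latticeHom k m (solAction k m (ofAdd 1) v) = 𝐭 * latticeHom k m v * 𝐭⁻¹ := by
  suffices (latticeHom k m).comp (solAction k m (ofAdd 1)).toMonoidHom =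
      (MulAut.conj 𝐭).toMonoidHom.comp (latticeHom k m) from DFunLike.congr_fun this v
  apply MonoidHom.ext_fin_two_int <;>
    simp only [MonoidHom.comp_apply, MulEquiv.coe_toMonoidHom, MulAut.conj_apply,
      solAction_ofAdd_one]
  · have ha : latticeHom k m (ofAdd ![1, 0]) = 𝐚 := by simp [latticeHom_ofAdd]
    rw [ha, t_conj_a, c_eq_latticeHom, ← map_inv, ← ofAdd_neg]
    congr 2
    ext i
    fin_cases i <;> simp
  · have hq : latticeHom k m (ofAdd ![0, 1]) = 𝐪 := by simp [latticeHom_ofAdd]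
    rw [hq, t_conj_q, c_eq_latticeHom, ← hq, ← map_zpow, ← map_mul, ← ofAdd_zsmul, ← ofAdd_add]
    congr 2
    ext i
    fin_cases i <;> simp; ring

noncomputable def toPresentedGroup (k m : ℤ) :
    Multiplicative (Fin 2 → ℤ) ⋊[solAction k m] Multiplicative ℤ →*
      PresentedGroup (solRels k m) :=
  SemidirectProduct.lift (latticeHom k m) (zpowersHom _ (.of 5))
    (SemidirectProduct.lift_compat_of_ofAdd_one latticeHom_solAction)

noncomputable def toSemidirectProduct (k m : ℤ) :
    PresentedGroup (solRels k m) →*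
      Multiplicative (Fin 2 → ℤ) ⋊[solAction k m] Multiplicative ℤ :=
  PresentedGroup.toGroup fun _ => lift_generatorImage_relator

theorem toPresentedGroup_comp_toSemidirectProduct :
    (toPresentedGroup k m).comp (toSemidirectProduct k m) = .id _ := by
  refine PresentedGroup.ext fun i => ?_
  fin_cases i <;>
    simp [toSemidirectProduct, toPresentedGroup, generatorImage, PresentedGroup.toGroup.of,
      latticeHom_ofAdd, b_eq_a, c_eq, d_eq_c]

theorem toSemidirectProduct_comp_toPresentedGroup :
    (toSemidirectProduct k m).comp (toPresentedGroup k m) = .id _ := by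
  refine SemidirectProduct.hom_ext (MonoidHom.ext_fin_two_int ?_ ?_) (MonoidHom.ext_mint ?_) <;>
    simp [toSemidirectProduct, toPresentedGroup, generatorImage, PresentedGroup.toGroup.of,
      latticeHom_ofAdd]

end SolGroup

/-- Let `k, m` be integers and let `G` be the group with presentation
`⟨a, b, c, d, q, t ∣ a q a⁻¹ = c q c⁻¹, q a q⁻¹ = b, q c q⁻¹ = d, t a t⁻¹ = c⁻¹,
t b t⁻¹ = c d⁻¹ c⁻¹, a b⁻¹ = 1, q⁻¹ t⁻¹ q t a^{2k} = 1, a⁻¹ c q^{2m} = 1⟩`.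
Then `G` is isomorphic to the semidirect product `ℤ² ⋊_A ℤ`, where the generator of
`ℤ` acts on `ℤ²` by the matrix `A = [[−1, −2k], [2m, 4km+1]]`. -/
theorem stmt18 (k m : ℤ) :
    Nonempty (PresentedGroup (solRels k m) ≃* SolGroup k m) :=
  ⟨(SolGroup.toSemidirectProduct k m).toMulEquiv (SolGroup.toPresentedGroup k m)
    SolGroup.toPresentedGroup_comp_toSemidirectProduct
    SolGroup.toSemidirectProduct_comp_toPresentedGroup⟩
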